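/- arXiv:2507.00678 — 2 statements merged into one kernel-verified Lean document; each statement's English description precedes it below -/
import Mathlib

section
/- Let H be a Hilbert space and A : D(A) ⊆ H → H a linear operator with graph norm ‖u‖_G² = ‖u‖² + ‖Au‖². Suppose A restricted to a closed subspace V ⊆ D(A) (with the graph norm) is a Banach-space isomorphism onto H, so that the adjoint-type problem is invertible with bounded inverse A⁻¹ of operator norm ‖A⁻¹‖. Then the bilinear form b(u,v) = (u, Av)_H on H × V satisfies the inf-sup condition inf_{u∈H, u≠0} sup_{v∈V, v≠0} |(u, Av)_H| / (‖u‖_H ‖v‖_G) ≥ (1 + ‖A⁻¹‖²)^{−1/2}. -/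
/-- if `A : V → H` is a bijection from a subspace `V ⊆ H` (with graph norm
`‖v‖_G = √(‖v‖² + ‖Av‖²)`) onto the Hilbert space `H`, with inverse `B` bounded by `c`,
then the bilinear form `b(u,v) = (u, Av)` satisfies the inf-sup condition with constant
`(1 + c²)^{-1/2}`. -/
theorem ultraweak_infSup {H : Type*} [NormedAddCommGroup H] [InnerProductSpace ℝ H]
    [CompleteSpace H] [Nontrivial H]
    (V : Submodule ℝ H) (A : V →ₗ[ℝ] H) (hbij : Function.Bijective A)
    (B : H →ₗ[ℝ] V) (hBA : ∀ f, A (B f) = f)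
    (c : ℝ) (hc : 0 ≤ c) (hB : ∀ f, ‖(B f : H)‖ ≤ c * ‖f‖) :
    (Real.sqrt (1 + c ^ 2))⁻¹ ≤
      ⨅ u : {u : H // u ≠ 0}, ⨆ v : {v : V // v ≠ 0},
        |(inner ℝ u.1 (A v.1) : ℝ)| /
          (‖u.1‖ * Real.sqrt (‖(v.1 : H)‖ ^ 2 + ‖A v.1‖ ^ 2)) := by
  obtain ⟨x, hx⟩ := exists_ne (0 : H)
  haveI : Nonempty {u : H // u ≠ 0} := ⟨⟨x, hx⟩⟩
  apply le_ciInf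
  intro u
  have hu : u.1 ≠ 0 := u.2
  have hn : (0:ℝ) < ‖u.1‖ := norm_pos_iff.mpr hu
  set n := ‖u.1‖ with hndef
  -- the candidate test function
  set v : V := B u.1 with hvdef
  have hAv : A v = u.1 := hBA u.1
  have hv0 : v ≠ 0 := by
    intro h
    apply hu
    rw [← hAv, h, map_zero]
  have hs : (0:ℝ) < Real.sqrt (1 + c ^ 2) := Real.sqrt_pos.mpr (by positivity)
  -- bounded above by 1
  have bdd : BddAbove (Set.range fun w : {w : V // w ≠ 0} =>
      |(inner ℝ u.1 (A w.1) : ℝ)| /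
        (‖u.1‖ * Real.sqrt (‖(w.1 : H)‖ ^ 2 + ‖A w.1‖ ^ 2))) := by
    refine ⟨1, ?_⟩
    rintro x ⟨w, rfl⟩
    have hw : (0:ℝ) < ‖(w.1 : H)‖ := by
      have : (w.1 : H) ≠ 0 := by
        simpa [Submodule.coe_eq_zero] using w.2
      exact norm_pos_iff.mpr this
    have hden : (0:ℝ) < ‖u.1‖ * Real.sqrt (‖(w.1 : H)‖ ^ 2 + ‖A w.1‖ ^ 2) := by
      apply mul_pos hn
      apply Real.sqrt_pos.mpr
      positivity
    rw [div_le_one hden]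
    have h1 : |(inner ℝ u.1 (A w.1) : ℝ)| ≤ ‖u.1‖ * ‖A w.1‖ := abs_real_inner_le_norm _ _
    have h2 : ‖A w.1‖ ≤ Real.sqrt (‖(w.1 : H)‖ ^ 2 + ‖A w.1‖ ^ 2) := by
      rw [show ‖A w.1‖ = Real.sqrt (‖A w.1‖ ^ 2) from (Real.sqrt_sq (norm_nonneg _)).symm]
      apply Real.sqrt_le_sqrt
      nlinarith [sq_nonneg ‖(w.1 : H)‖, Real.sq_sqrt (sq_nonneg ‖A w.1‖),
        Real.sqrt_sq (norm_nonneg (A w.1))]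
    calc |(inner ℝ u.1 (A w.1) : ℝ)| ≤ ‖u.1‖ * ‖A w.1‖ := h1
      _ ≤ ‖u.1‖ * Real.sqrt (‖(w.1 : H)‖ ^ 2 + ‖A w.1‖ ^ 2) :=
        mul_le_mul_of_nonneg_left h2 (norm_nonneg _)
  refine le_trans ?_ (le_ciSup bdd ⟨v, hv0⟩)
  -- the estimate for the candidate
  have hD : Real.sqrt (‖(v : H)‖ ^ 2 + ‖A v‖ ^ 2) ≤ Real.sqrt (1 + c ^ 2) * n := by
    have hb := hB u.1
    have h1 : ‖(v : H)‖ ^ 2 + ‖A v‖ ^ 2 ≤ (1 + c ^ 2) * n ^ 2 := by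
      rw [hAv]
      nlinarith [norm_nonneg (v : H), hn.le]
    calc Real.sqrt (‖(v : H)‖ ^ 2 + ‖A v‖ ^ 2) ≤ Real.sqrt ((1 + c ^ 2) * n ^ 2) :=
        Real.sqrt_le_sqrt h1
      _ = Real.sqrt (1 + c ^ 2) * n := by
        rw [Real.sqrt_mul (by positivity), Real.sqrt_sq hn.le]
  have hDpos : (0:ℝ) < Real.sqrt (‖(v : H)‖ ^ 2 + ‖A v‖ ^ 2) := by
    apply Real.sqrt_pos.mpr
    rw [hAv]
    positivity
  have hinner : |(inner ℝ u.1 (A v) : ℝ)| = n ^ 2 := by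
    rw [hAv, real_inner_self_eq_norm_sq, abs_of_nonneg (by positivity)]
  have key : (Real.sqrt (1 + c ^ 2))⁻¹ = n ^ 2 / (n * (Real.sqrt (1 + c ^ 2) * n)) := by
    field_simp
  calc (Real.sqrt (1 + c ^ 2))⁻¹ = n ^ 2 / (n * (Real.sqrt (1 + c ^ 2) * n)) := key
    _ ≤ n ^ 2 / (n * Real.sqrt (‖(v : H)‖ ^ 2 + ‖A v‖ ^ 2)) := by
        apply div_le_div_of_nonneg_left (by positivity) (by positivity)
        exact mul_le_mul_of_nonneg_left hD hn.le
    _ = |(inner ℝ u.1 (A (⟨v, hv0⟩ : {w : V // w ≠ 0}).1) : ℝ)| /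
          (‖u.1‖ * Real.sqrt (‖((⟨v, hv0⟩ : {w : V // w ≠ 0}).1 : H)‖ ^ 2 +
            ‖A (⟨v, hv0⟩ : {w : V // w ≠ 0}).1‖ ^ 2)) := by
        rw [hinner]
end

section
/- Let H be a Hilbert space, V ⊆ H a subspace with graph norm of a linear map A : V → H, and assume A : V → H is bijective with ‖A⁻¹f‖_H ≤ c‖f‖_H for all f ∈ H. Then the bilinear form b(u,v) = (u, Av)_H is continuous on H × (V, ‖·‖_G): |b(u,v)| ≤ ‖u‖_H ‖v‖_G, and by the Banach–Nečas–Babuška theorem the ultraweak problem — find u ∈ H with (u, Av)_H = f(v) for all v ∈ V — has a unique solution for every bounded linear functional f on (V, ‖·‖_G). -/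
/-- for `A : V → H` bijective with bounded inverse `B` (`‖Bf‖ ≤ c‖f‖`), the
bilinear form `b(u,v) = (u, Av)` is continuous with respect to the graph norm,
`|b(u,v)| ≤ ‖u‖·‖v‖_G`, and the ultraweak problem `(u, Av) = f(v)` for all `v ∈ V`
admits a unique solution `u ∈ H` for every linear functional `f` on `V` bounded with
respect to the graph norm. -/
theorem ultraweak_wellPosed {H : Type*} [NormedAddCommGroup H] [InnerProductSpace ℝ H]
    [CompleteSpace H]
    (V : Submodule ℝ H) (A : V →ₗ[ℝ] H) (hbij : Function.Bijective A)
    (B : H →ₗ[ℝ] V) (hBA : ∀ f, A (B f) = f)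
    (c : ℝ) (hc : 0 ≤ c) (hB : ∀ f, ‖(B f : H)‖ ≤ c * ‖f‖) :
    (∀ (u : H) (v : V),
      |(inner ℝ u (A v) : ℝ)| ≤ ‖u‖ * Real.sqrt (‖(v : H)‖ ^ 2 + ‖A v‖ ^ 2)) ∧
    (∀ (f : V →ₗ[ℝ] ℝ) (Cf : ℝ),
      (∀ v : V, |f v| ≤ Cf * Real.sqrt (‖(v : H)‖ ^ 2 + ‖A v‖ ^ 2)) →
      ∃! u : H, ∀ v : V, (inner ℝ u (A v) : ℝ) = f v) := by
  have hBAv : ∀ v : V, B (A v) = v := fun v => hbij.1 (hBA (A v))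
  constructor
  · intro u v
    have h1 : |(inner ℝ u (A v) : ℝ)| ≤ ‖u‖ * ‖A v‖ := abs_real_inner_le_norm u (A v)
    have h2 : ‖A v‖ ≤ Real.sqrt (‖(v : H)‖ ^ 2 + ‖A v‖ ^ 2) := by
      have := Real.sqrt_le_sqrt (show ‖A v‖ ^ 2 ≤ ‖(v : H)‖ ^ 2 + ‖A v‖ ^ 2 by nlinarith [sq_nonneg ‖(v : H)‖])
      rwa [Real.sqrt_sq (norm_nonneg _)] at this
    calc |(inner ℝ u (A v) : ℝ)| ≤ ‖u‖ * ‖A v‖ := h1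
      _ ≤ ‖u‖ * Real.sqrt (‖(v : H)‖ ^ 2 + ‖A v‖ ^ 2) := by
          exact mul_le_mul_of_nonneg_left h2 (norm_nonneg _)
  · intro f Cf hf
    set C : ℝ := max Cf 0 with hC
    have hC0 : 0 ≤ C := le_max_right _ _
    have hf' : ∀ v : V, |f v| ≤ C * Real.sqrt (‖(v : H)‖ ^ 2 + ‖A v‖ ^ 2) := by
      intro v
      exact (hf v).trans (mul_le_mul_of_nonneg_right (le_max_left _ _) (Real.sqrt_nonneg _))
    -- the functional g(w) = f(B w) is bounded on H
    have hbound : ∀ w : H, ‖(f.comp B) w‖ ≤ (C * (c + 1)) * ‖w‖ := by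
      intro w
      have h1 : |f (B w)| ≤ C * Real.sqrt (‖(B w : H)‖ ^ 2 + ‖A (B w)‖ ^ 2) := hf' (B w)
      rw [hBA w] at h1
      have h2 : Real.sqrt (‖(B w : H)‖ ^ 2 + ‖w‖ ^ 2) ≤ ‖(B w : H)‖ + ‖w‖ := by
        have hnn : 0 ≤ ‖(B w : H)‖ + ‖w‖ := by positivity
        have := Real.sqrt_le_sqrt (show ‖(B w : H)‖ ^ 2 + ‖w‖ ^ 2 ≤ (‖(B w : H)‖ + ‖w‖) ^ 2 by
          nlinarith [norm_nonneg (B w : H), norm_nonneg w])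
        rwa [Real.sqrt_sq hnn] at this
      have h3 : ‖(B w : H)‖ + ‖w‖ ≤ (c + 1) * ‖w‖ := by
        have := hB w
        nlinarith [norm_nonneg w]
      calc ‖(f.comp B) w‖ = |f (B w)| := rfl
        _ ≤ C * Real.sqrt (‖(B w : H)‖ ^ 2 + ‖w‖ ^ 2) := h1
        _ ≤ C * ((c + 1) * ‖w‖) := by
            exact mul_le_mul_of_nonneg_left (h2.trans h3) hC0
        _ = (C * (c + 1)) * ‖w‖ := by ring
    let G : H →L[ℝ] ℝ := LinearMap.mkContinuous (f.comp B) (C * (c + 1)) hbound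
    set u : H := (InnerProductSpace.toDual ℝ H).symm G with hu
    refine ⟨u, ?_, ?_⟩
    · intro v
      have : (inner ℝ u (A v) : ℝ) = G (A v) := InnerProductSpace.toDual_symm_apply
      rw [this]
      show (f.comp B) (A v) = f v
      simp [LinearMap.comp_apply, hBAv v]
    · intro y hy
      have hy' : ∀ v : V, (inner ℝ y (A v) : ℝ) = f v := hy
      have hueq : ∀ v : V, (inner ℝ u (A v) : ℝ) = f v := by
        intro v
        have : (inner ℝ u (A v) : ℝ) = G (A v) := InnerProductSpace.toDual_symm_apply
        rw [this]
        show (f.comp B) (A v) = f v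
        simp [LinearMap.comp_apply, hBAv v]
      apply ext_inner_right ℝ
      intro w
      obtain ⟨v, rfl⟩ := hbij.2 w
      rw [hy' v, hueq v]
end
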